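/- For n even, n ≥ 4, with B = [[2cos(π/n), 1],[-1, 0]] and τ = 1 + 2cos(π/n): the Möbius actions satisfy B^(n/2)·(-τ) = -τ + 2 and B·(-1) = -τ + 2; consequently B^(n/2 - 1)·(-τ) = -1. -/

import Mathlib

/-- Möbius action of a 2×2 real matrix on a real number. -/
noncomputable def moebius (M : Matrix (Fin 2) (Fin 2) ℝ) (x : ℝ) : ℝ :=
  (M 0 0 * x + M 0 1) / (M 1 0 * x + M 1 1)

/-!
With `θ = π / n`, the matrix `B` has eigenvalues `e^{± iθ}`, so `B ^ k` is `(sin θ)⁻¹` times the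
matrix of sines `[[sin ((k+1)θ), sin (kθ)], [-sin (kθ), -sin ((k-1)θ)]]`, and the scalar factor does
not affect the Möbius action. For `k = n / 2` and `k = n / 2 - 1` the angle `kθ` is `π / 2` and
`π / 2 - θ`, so all entries become `1`, `cos θ` or `cos 2θ`; after that, both Möbius values are
quotients with denominator `1 + cos θ`.
-/

open Real Matrix

lemma moebius_of (a b c d x : ℝ) : moebius !![a, b; c, d] x = (a * x + b) / (c * x + d) := rfl

lemma moebius_smul {r : ℝ} (hr : r ≠ 0) (M : Matrix (Fin 2) (Fin 2) ℝ) (x : ℝ) :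
    moebius (r • M) x = moebius M x := by
  simp only [moebius, Matrix.smul_apply, smul_eq_mul, mul_assoc, ← mul_add]
  exact mul_div_mul_left _ _ hr

lemma sin_add_add_sin_sub (x θ : ℝ) : sin (x + θ) + sin (x - θ) = 2 * cos θ * sin x := by
  rw [sin_add, sin_sub]; ring

lemma pow_eq_inv_sin_smul {θ : ℝ} (hθ : sin θ ≠ 0) (k : ℕ) :
    !![2 * cos θ, 1; -1, 0] ^ k =
      (sin θ)⁻¹ • !![sin (k * θ + θ), sin (k * θ); -sin (k * θ), -sin (k * θ - θ)] := by
  induction k with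
  | zero =>
    ext i j
    fin_cases i <;> fin_cases j <;> simp [hθ]
  | succ k ih =>
    have h₁ := sin_add_add_sin_sub (k * θ + θ) θ
    have h₂ := sin_add_add_sin_sub (k * θ) θ
    rw [add_sub_cancel_right] at h₁
    rw [pow_succ, ih, smul_mul_assoc]
    congr 1
    ext i j
    fin_cases i <;> fin_cases j <;> simp [mul_apply, add_mul] <;> linarith

lemma moebius_pow {θ : ℝ} (hθ : sin θ ≠ 0) (k : ℕ) (x : ℝ) :
    moebius (!![2 * cos θ, 1; -1, 0] ^ k) x =
      (sin (k * θ + θ) * x + sin (k * θ)) / (-sin (k * θ) * x - sin (k * θ - θ)) := by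
  rw [pow_eq_inv_sin_smul hθ, moebius_smul (inv_ne_zero hθ), moebius_of, ← sub_eq_add_neg]

theorem stmt_8 (n : ℕ) (hn : 4 ≤ n) (hneven : Even n)
    (τ : ℝ) (hτ : τ = 1 + 2 * Real.cos (Real.pi / n))
    (B : Matrix (Fin 2) (Fin 2) ℝ)
    (hB : B = !![2 * Real.cos (Real.pi / n), 1; -1, 0]) :
    moebius (B ^ (n / 2)) (-τ) = -τ + 2 ∧
    moebius B (-1) = -τ + 2 ∧
    moebius (B ^ (n / 2 - 1)) (-τ) = -1 := by
  obtain ⟨m, rfl⟩ := hneven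
  have hm : 1 ≤ m := by omega
  set θ := π / ↑(m + m)
  have hmθ : m * θ = π / 2 := by
    simp only [θ]; push_cast; field_simp; ring
  have hθpos : 0 < θ := by positivity
  have hθle : θ ≤ π / 2 := by
    rw [← hmθ]; exact le_mul_of_one_le_left hθpos.le (by exact_mod_cast hm)
  have hsin : sin θ ≠ 0 := (sin_pos_of_pos_of_lt_pi hθpos (by linarith [pi_pos])).ne'
  have hcos : 0 ≤ cos θ := cos_nonneg_of_neg_pi_div_two_le_of_le (by linarith) hθle
  have hhalf : (m + m) / 2 = m := by omega
  subst hτ hB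
  refine ⟨?_, ?_, ?_⟩
  · rw [hhalf, moebius_pow hsin, hmθ, sin_pi_div_two, sin_pi_div_two_sub, add_comm (π / 2) θ,
      sin_add_pi_div_two]
    rw [div_eq_iff (by linarith)]
    ring
  · rw [moebius_of]; ring
  · have hangle : ((m - 1 : ℕ) : ℝ) * θ = π / 2 - θ := by
      rw [Nat.cast_sub hm, sub_mul, hmθ, Nat.cast_one, one_mul]
    rw [hhalf, moebius_pow hsin, hangle, sub_add_cancel, sin_pi_div_two, sin_pi_div_two_sub,
      sub_sub, ← two_mul, sin_pi_div_two_sub, cos_two_mul]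
    rw [div_eq_iff (by nlinarith)]
    ring
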